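/- Let u and v be words of length at least k − 1 over a finite alphabet A such that |u|_t = |v|_t for every word t of length k. If u and v have the same prefix of length k − 1 and the same suffix of length k − 1, then |u|_s = |v|_s for every nonempty word s of length at most k − 1; in particular u ∼_k v. -/
import Mathlib

/-- Number of occurrences of `x` as a factor of `w`. -/
def occ {A : Type*} [DecidableEq A] (w x : List A) : ℕ :=
  ((List.range (w.length + 1)).filter (fun i => decide (x <+: w.drop i))).length

/-- `k`-Abelian equivalence. -/
def KAbEq {A : Type*} [DecidableEq A] (k : ℕ) (u v : List A) : Prop :=
  ∀ x : List A, x ≠ [] → x.length ≤ k → occ u x = occ v x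

lemma occ_nil {A : Type*} [DecidableEq A] (s : List A) :
    occ ([] : List A) s = if s = [] then 1 else 0 := by
  by_cases h : s = [] <;> simp [occ, List.range_succ, List.prefix_nil, h]

lemma occ_cons {A : Type*} [DecidableEq A] (b : A) (w s : List A) :
    occ (b :: w) s = (if s <+: (b :: w) then 1 else 0) + occ w s := by
  unfold occ
  rw [← List.countP_eq_length_filter, ← List.countP_eq_length_filter]
  simp only [List.length_cons]
  rw [List.range_succ_eq_map, List.countP_cons, List.countP_map]
  simp only [Function.comp_def, Nat.succ_eq_add_one, List.drop_succ_cons, List.drop_zero]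
  by_cases h : s <+: b :: w <;> simp [h, Nat.add_comm]

lemma pref_ext {A : Type*} [Fintype A] [DecidableEq A] :
    ∀ (w s : List A), s ≠ w →
      (if s <+: w then 1 else 0) = ∑ a : A, (if s ++ [a] <+: w then 1 else 0) := by
  intro w
  induction w with
  | nil =>
    intro s h
    simp [List.prefix_nil, h]
  | cons b w ih =>
    intro s h
    cases s with
    | nil =>
      simp only [List.nil_prefix, if_pos, List.nil_append]
      have : ∀ a : A, ([a] <+: b :: w) ↔ a = b := by
        intro a; rw [show [a] = a :: ([] : List A) from rfl, List.cons_prefix_cons]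
        simp
      simp only [this]
      rw [Finset.sum_ite_eq' Finset.univ b (fun _ => 1)]
      simp
    | cons c s' =>
      by_cases hc : c = b
      · subst hc
        have h' : s' ≠ w := by intro he; exact h (by rw [he])
        simp only [List.cons_append, List.cons_prefix_cons, true_and]
        exact ih s' h'
      · simp [List.cons_prefix_cons, hc]

lemma occ_succ {A : Type*} [Fintype A] [DecidableEq A] (w s : List A) :
    occ w s = (∑ a : A, occ w (s ++ [a])) + (if s <:+ w then 1 else 0) := by
  induction w with
  | nil =>
    rw [occ_nil]
    simp only [occ_nil, List.append_eq_nil_iff, List.suffix_nil]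
    simp
  | cons b w ih =>
    rw [occ_cons, ih]
    have hsum : ∀ a : A, occ (b :: w) (s ++ [a]) =
        (if s ++ [a] <+: b :: w then 1 else 0) + occ w (s ++ [a]) := fun a => occ_cons b w _
    simp only [hsum]
    rw [Finset.sum_add_distrib]
    by_cases hsw : s = b :: w
    · subst hsw
      have h1 : ¬ ((b :: w) <:+ w) := by
        intro h; have := h.length_le; simp at this
      have h2 : ∀ a : A, ¬ ((b :: w) ++ [a] <+: b :: w) := by
        intro a h; have := h.length_le; simp at this
      rw [if_pos (List.prefix_refl _), if_neg h1, if_pos (List.suffix_refl _),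
        Finset.sum_eq_zero (fun a _ => if_neg (h2 a))]
      ring
    · rw [pref_ext (b :: w) s hsw]
      have h3 : (s <:+ w) ↔ (s <:+ b :: w) := by
        rw [List.suffix_cons_iff]
        constructor
        · intro h; exact Or.inr h
        · rintro (h | h)
          · exact absurd h hsw
          · exact h
      rw [if_congr h3 rfl rfl]
      ring

theorem stmt5 {A : Type*} [Fintype A] [DecidableEq A] (k : ℕ) (hk : 1 ≤ k)
    (u v : List A) (hu : k - 1 ≤ u.length) (hv : k - 1 ≤ v.length)
    (hfk : ∀ t : List A, t.length = k → occ u t = occ v t)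
    (hpref : u.take (k - 1) = v.take (k - 1))
    (hsuff : u.drop (u.length - (k - 1)) = v.drop (v.length - (k - 1))) :
    (∀ s : List A, s ≠ [] → s.length ≤ k - 1 → occ u s = occ v s) ∧ KAbEq k u v := by
  have hsufeq : ∀ s : List A, s.length ≤ k - 1 → ((s <:+ u) ↔ (s <:+ v)) := by
    intro s hs
    rw [List.suffix_iff_eq_drop, List.suffix_iff_eq_drop]
    have h1 : u.drop (u.length - s.length) =
        (u.drop (u.length - (k - 1))).drop ((k - 1) - s.length) := by
      rw [List.drop_drop]; congr 1; omega
    have h2 : v.drop (v.length - s.length) =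
        (v.drop (v.length - (k - 1))).drop ((k - 1) - s.length) := by
      rw [List.drop_drop]; congr 1; omega
    rw [h1, h2, hsuff]
  have key : ∀ n : ℕ, ∀ s : List A, s ≠ [] → s.length ≤ k → k - s.length ≤ n →
      occ u s = occ v s := by
    intro n
    induction n with
    | zero =>
      intro s hne hle h0
      exact hfk s (by omega)
    | succ n ih =>
      intro s hne hle hn
      by_cases hs : s.length = k
      · exact hfk s hs
      · rw [occ_succ u s, occ_succ v s]
        have hsuf := hsufeq s (by omega)
        congr 1
        · apply Finset.sum_congr rfl
          intro a _
          exact ih (s ++ [a]) (by simp) (by simp; omega) (by simp; omega)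
        · exact if_congr hsuf rfl rfl
  refine ⟨fun s hne hle => key (k - s.length) s hne (by omega) le_rfl, ?_⟩
  intro s hne hle
  exact key (k - s.length) s hne hle le_rfl
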